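/- Let I be a bounded interval, (W_n) a sequence of graphons with values in I, and 0 ≤ h ≤ 1. If for every q' ≥ 1 and every symmetric q'×q' matrix J' the sequence (E^{h/q'}(W_n, J'))_n converges, then for every q ≥ 1, every nonnegative vector x = (x₁,…,x_q) with Σx_i = h, and every symmetric q×q matrix J, the sequence (E^x(W_n, J))_n converges. -/

import Mathlib

/-!
A fractional partition with marginals `a` can be turned into one with marginals `b` by moving
`L¹`-mass `∑ |aᵢ - bᵢ|`, and for `|W| ≤ M` the energy is `2M ∑ |Jᵢⱼ|`-Lipschitz in `L¹`. So
`mgse W J a` is Lipschitz in `a`, and `ltgseV W J x` in thresholds `x` of fixed total mass,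
uniformly in `W`.

Splitting each class `i` into `kᵢ` copies (the matrix `J.submatrix g g` for a map `g` whose
fibres have sizes `kᵢ`) identifies `ltgse W (J.submatrix g g) c` with `ltgseV W J (kᵢ c)ᵢ`.
Approximating `x` by `(kᵢ h / ∑ k)ᵢ` then exhibits `ltgseV (W n) J x` as a uniform limit of
convergent sequences, hence as a Cauchy sequence.
-/

open MeasureTheory Filter

noncomputable section

/-- The unit interval as a subset of ℝ. -/
def I01 : Set ℝ := Set.Icc 0 1

/-- A `q`-fractional partition: measurable functions `ρ i : [0,1] → [0,1]`
summing pointwise to `1` on `[0,1]`. -/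
structure FracPartition (q : ℕ) where
  toFun : Fin q → ℝ → ℝ
  measurable : ∀ i, Measurable (toFun i)
  mem_I01 : ∀ i x, x ∈ I01 → toFun i x ∈ I01
  sum_one : ∀ x ∈ I01, ∑ i, toFun i x = 1

/-- Energy of a fractional partition with respect to a graphon `W` and matrix `J`. -/
def energy {q : ℕ} (W : ℝ → ℝ → ℝ) (J : Matrix (Fin q) (Fin q) ℝ)
    (ρ : FracPartition q) : ℝ :=
  - ∑ i, ∑ j, J i j * ∫ x in I01, ∫ y in I01, ρ.toFun i x * ρ.toFun j y * W x y

/-- `a` is a probability distribution on `Fin q`. -/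
def IsDist {q : ℕ} (a : Fin q → ℝ) : Prop :=
  (∀ i, 0 ≤ a i) ∧ ∑ i, a i = 1

/-- Microcanonical ground state energy. -/
def mgse {q : ℕ} (W : ℝ → ℝ → ℝ) (J : Matrix (Fin q) (Fin q) ℝ) (a : Fin q → ℝ) : ℝ :=
  sInf {e | ∃ ρ : FracPartition q, (∀ i, (∫ x in I01, ρ.toFun i x) = a i) ∧ e = energy W J ρ}

/-- General lower threshold ground state energy with threshold vector `x`. -/
def ltgseV {q : ℕ} (W : ℝ → ℝ → ℝ) (J : Matrix (Fin q) (Fin q) ℝ) (x : Fin q → ℝ) : ℝ :=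
  sInf {e | ∃ a : Fin q → ℝ, IsDist a ∧ (∀ i, x i ≤ a i) ∧ e = mgse W J a}

/-- Homogeneous lower threshold ground state energy with scalar threshold `c`. -/
def ltgse {q : ℕ} (W : ℝ → ℝ → ℝ) (J : Matrix (Fin q) (Fin q) ℝ) (c : ℝ) : ℝ :=
  ltgseV W J (fun _ => c)

/-- Unrestricted ground state energy. -/
def gse {q : ℕ} (W : ℝ → ℝ → ℝ) (J : Matrix (Fin q) (Fin q) ℝ) : ℝ :=
  sInf {e | ∃ ρ : FracPartition q, e = energy W J ρ}

/-- `W` is a graphon: a bounded symmetric measurable function. -/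
def IsGraphon (W : ℝ → ℝ → ℝ) : Prop :=
  Measurable (Function.uncurry W) ∧ (∀ x y, W x y = W y x) ∧ ∃ M, ∀ x y, |W x y| ≤ M

open MeasureTheory Filter Finset Function

lemma csInf_le_csInf_add {S T : Set ℝ} (hS : S.Nonempty) (hT : BddBelow T) {c : ℝ}
    (h : ∀ e ∈ S, ∃ e' ∈ T, e' ≤ e + c) : sInf T ≤ sInf S + c := by
  have : sInf T - c ≤ sInf S := le_csInf hS fun e he => by
    obtain ⟨e', he', hle⟩ := h e he
    linarith [csInf_le hT he']
  linarith

lemma cauchySeq_of_forall_exists_cauchySeq_dist_le {α : Type*} [PseudoMetricSpace α]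
    {F : ℕ → α} (h : ∀ ε > 0, ∃ G : ℕ → α, CauchySeq G ∧ ∀ n, dist (F n) (G n) ≤ ε) :
    CauchySeq F := by
  refine Metric.cauchySeq_iff.2 fun ε hε => ?_
  obtain ⟨G, hG, hFG⟩ := h (ε / 3) (by positivity)
  obtain ⟨N, hN⟩ := Metric.cauchySeq_iff.1 hG (ε / 3) (by positivity)
  refine ⟨N, fun m hm n hn => ?_⟩
  calc dist (F m) (F n) ≤ dist (F m) (G m) + dist (G m) (G n) + dist (G n) (F n) :=
        dist_triangle4 _ _ _ _
    _ < ε := by linarith [hFG m, hFG n, hN m hm n hn, dist_comm (G n) (F n)]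

section Fibers

variable {ι κ : Type*} [Fintype ι] [DecidableEq κ]

def fiberCard (g : ι → κ) (i : κ) : ℕ := #{α | g α = i}

def fiberSum (g : ι → κ) (u : ι → ℝ) (i : κ) : ℝ := ∑ α with g α = i, u α

def fiberSplit (g : ι → κ) (u : κ → ℝ) (α : ι) : ℝ := u (g α) / fiberCard g (g α)

lemma fiberCard_pos {g : ι → κ} (hg : Surjective g) (i : κ) : 0 < fiberCard g i := by
  obtain ⟨α, rfl⟩ := hg i
  exact card_pos.2 ⟨α, by simp⟩

lemma sum_fiberSum [Fintype κ] (g : ι → κ) (u : ι → ℝ) : ∑ i, fiberSum g u i = ∑ α, u α :=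
  sum_fiberwise _ g u

lemma sum_fiberCard [Fintype κ] (g : ι → κ) : ∑ i, fiberCard g i = Fintype.card ι :=
  (card_eq_sum_card_fiberwise fun α _ => mem_univ (g α)).symm

lemma fiberSum_const (g : ι → κ) (c : ℝ) (i : κ) :
    fiberSum g (fun _ => c) i = fiberCard g i * c := by
  simp [fiberSum, fiberCard]

lemma fiberSum_fiberSplit {g : ι → κ} (hg : Surjective g) (u : κ → ℝ) :
    fiberSum g (fiberSplit g u) = u := by
  ext i
  have hk : (fiberCard g i : ℝ) ≠ 0 := by exact_mod_cast (fiberCard_pos hg i).ne'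
  calc fiberSum g (fiberSplit g u) i = ∑ α with g α = i, u i / fiberCard g i :=
        sum_congr rfl fun α hα => by rw [fiberSplit, (mem_filter.1 hα).2]
    _ = u i := by rw [sum_const, nsmul_eq_mul, ← fiberCard]; field_simp

lemma sum_mul_submatrix_eq [Fintype κ] (g : ι → κ) (J : Matrix κ κ ℝ) (u v : ι → ℝ) :
    ∑ α, ∑ β, J.submatrix g g α β * u α * v β =
      ∑ i, ∑ j, J i j * fiberSum g u i * fiberSum g v j := by
  simp only [fiberSum, mul_sum, sum_mul, Matrix.submatrix_apply]
  rw [← sum_fiberwise univ g (fun α => ∑ β, J (g α) (g β) * u α * v β)]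
  refine sum_congr rfl fun i _ => ?_
  calc ∑ α with g α = i, ∑ β, J (g α) (g β) * u α * v β
      = ∑ α with g α = i, ∑ j, ∑ β with g β = j, J i j * u α * v β :=
        sum_congr rfl fun α hα => by
          rw [← sum_fiberwise univ g (fun β => J (g α) (g β) * u α * v β)]
          exact sum_congr rfl fun j _ => sum_congr rfl fun β hβ => by
            rw [(mem_filter.1 hα).2, (mem_filter.1 hβ).2]
    _ = _ := by rw [sum_comm]; exact sum_congr rfl fun j _ => sum_comm

end Fibers

instance : IsProbabilityMeasure (volume.restrict I01) := ⟨by simp [I01]⟩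

lemma integrableOn_I01_of_bound {f : ℝ → ℝ} (hf : Measurable f) (C : ℝ)
    (hC : ∀ x ∈ I01, |f x| ≤ C) : IntegrableOn f I01 :=
  Integrable.of_bound hf.aestronglyMeasurable C
    ((ae_restrict_iff' measurableSet_Icc).2 (Eventually.of_forall hC))

section Partitions

variable {q n : ℕ}

lemma IsDist.le_one {a : Fin q → ℝ} (ha : IsDist a) (i : Fin q) : a i ≤ 1 :=
  ha.2 ▸ single_le_sum (fun j _ => ha.1 j) (mem_univ i)

lemma IsDist.fiberSum {g : Fin n → Fin q} {u : Fin n → ℝ} (hu : IsDist u) :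
    IsDist (fiberSum g u) :=
  ⟨fun _ => sum_nonneg fun α _ => hu.1 α, (sum_fiberSum g u).trans hu.2⟩

lemma IsDist.fiberSplit {g : Fin n → Fin q} (hg : Surjective g) {u : Fin q → ℝ}
    (hu : IsDist u) : IsDist (fiberSplit g u) :=
  ⟨fun _ => div_nonneg (hu.1 _) (Nat.cast_nonneg _), by
    rw [← sum_fiberSum g, fiberSum_fiberSplit hg, hu.2]⟩

lemma IsDist.redistribute {s w u : Fin q → ℝ} (hu : IsDist u) (hs : ∀ i, s i ≤ 1)
    (hs₀ : ∀ i, 0 ≤ s i) (hw : IsDist w) :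
    IsDist (fun i => s i * u i + w i * ∑ j, (1 - s j) * u j) := by
  refine ⟨fun i => add_nonneg (mul_nonneg (hs₀ i) (hu.1 i))
    (mul_nonneg (hw.1 i) (sum_nonneg fun j _ => mul_nonneg (by linarith [hs j]) (hu.1 j))), ?_⟩
  simp only [sum_add_distrib, ← sum_mul, hw.2, one_mul, sub_mul, sum_sub_distrib, hu.2]
  ring

lemma exists_isDist_ge [NeZero q] {x : Fin q → ℝ} (hx : ∀ i, 0 ≤ x i) (hs : ∑ i, x i ≤ 1) :
    ∃ a, IsDist a ∧ ∀ i, x i ≤ a i := by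
  have hgap : 0 ≤ (1 - ∑ i, x i) / q := div_nonneg (by linarith) (Nat.cast_nonneg q)
  refine ⟨fun i => x i + (1 - ∑ j, x j) / q, ⟨fun i => by linarith [hx i], ?_⟩,
    fun i => by linarith⟩
  have hq : (q : ℝ) ≠ 0 := Nat.cast_ne_zero.2 (NeZero.ne q)
  rw [sum_add_distrib, sum_const, card_univ, Fintype.card_fin, nsmul_eq_mul]
  field_simp
  ring

namespace FracPartition

def ofIsDist (f : Fin q → ℝ → ℝ) (hf : ∀ i, Measurable (f i))
    (hd : ∀ x ∈ I01, IsDist fun i => f i x) : FracPartition q where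
  toFun := f
  measurable := hf
  mem_I01 i x hx := ⟨(hd x hx).1 i, (hd x hx).le_one i⟩
  sum_one x hx := (hd x hx).2

lemma isDist (ρ : FracPartition q) {x : ℝ} (hx : x ∈ I01) : IsDist fun i => ρ.toFun i x :=
  ⟨fun i => (ρ.mem_I01 i x hx).1, ρ.sum_one x hx⟩

lemma abs_le_one (ρ : FracPartition q) (i : Fin q) {x : ℝ} (hx : x ∈ I01) :
    |ρ.toFun i x| ≤ 1 :=
  abs_le.2 ⟨by linarith [(ρ.mem_I01 i x hx).1], (ρ.mem_I01 i x hx).2⟩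

lemma integrableOn (ρ : FracPartition q) (i : Fin q) : IntegrableOn (ρ.toFun i) I01 :=
  integrableOn_I01_of_bound (ρ.measurable i) 1 fun _ hx => ρ.abs_le_one i hx

def const (a : Fin q → ℝ) (ha : IsDist a) : FracPartition q :=
  ofIsDist (fun i _ => a i) (fun _ => measurable_const) fun _ _ => ha

lemma integral_const (a : Fin q → ℝ) (ha : IsDist a) (i : Fin q) :
    ∫ x in I01, (const a ha).toFun i x = a i := by
  simp [const, ofIsDist]

def group (g : Fin n → Fin q) (ρ : FracPartition n) : FracPartition q :=
  ofIsDist (fun i x => fiberSum g (fun α => ρ.toFun α x) i)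
    (fun _ => Finset.measurable_sum _ fun α _ => ρ.measurable α)
    fun _ hx => (ρ.isDist hx).fiberSum

def split (g : Fin n → Fin q) (hg : Surjective g) (ρ : FracPartition q) : FracPartition n :=
  ofIsDist (fun α x => fiberSplit g (fun i => ρ.toFun i x) α)
    (fun _ => (ρ.measurable _).div_const _) fun _ hx => (ρ.isDist hx).fiberSplit hg

lemma group_split {g : Fin n → Fin q} (hg : Surjective g) (ρ : FracPartition q) :
    group g (split g hg ρ) = ρ := by
  obtain ⟨f, _, _, _⟩ := ρ
  simp only [group, split, ofIsDist, mk.injEq]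
  funext i x
  exact congrFun (fiberSum_fiberSplit hg fun i => f i x) i

lemma integral_group (g : Fin n → Fin q) (ρ : FracPartition n) (i : Fin q) :
    ∫ x in I01, (group g ρ).toFun i x = fiberSum g (fun α => ∫ x in I01, ρ.toFun α x) i :=
  integral_finsetSum (μ := volume.restrict I01) {α | g α = i} fun α _ => ρ.integrableOn α

lemma integral_split {g : Fin n → Fin q} (hg : Surjective g) (ρ : FracPartition q)
    (α : Fin n) :
    ∫ x in I01, (split g hg ρ).toFun α x = fiberSplit g (fun i => ∫ x in I01, ρ.toFun i x) α :=
  integral_div _ _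

end FracPartition

end Partitions

section BilinearBounds

variable {q : ℕ}

lemma abs_sum_mul_mul_le (J : Matrix (Fin q) (Fin q) ℝ) {u v : Fin q → ℝ}
    (hu : ∀ i, |u i| ≤ 1) (hv : ∀ j, |v j| ≤ 1) :
    |∑ i, ∑ j, J i j * u i * v j| ≤ ∑ i, ∑ j, |J i j| := by
  refine (abs_sum_le_sum_abs _ _).trans (sum_le_sum fun i _ =>
    (abs_sum_le_sum_abs _ _).trans (sum_le_sum fun j _ => ?_))
  rw [abs_mul, abs_mul, mul_assoc]
  exact mul_le_of_le_one_right (abs_nonneg _)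
    (mul_le_one₀ (hu i) (abs_nonneg _) (hv j))

lemma abs_sum_mul_mul_sub_le (J : Matrix (Fin q) (Fin q) ℝ) {u u' v v' : Fin q → ℝ}
    (hu' : ∀ i, |u' i| ≤ 1) (hv : ∀ j, |v j| ≤ 1) :
    |∑ i, ∑ j, J i j * u i * v j - ∑ i, ∑ j, J i j * u' i * v' j| ≤
      (∑ i, ∑ j, |J i j|) * (∑ i, |u i - u' i| + ∑ j, |v j - v' j|) := by
  simp only [← sum_sub_distrib, sum_mul]
  refine (abs_sum_le_sum_abs _ _).trans (sum_le_sum fun i _ =>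
    (abs_sum_le_sum_abs _ _).trans (sum_le_sum fun j _ => ?_))
  have hterm : |u i * v j - u' i * v' j| ≤ |u i - u' i| + |v j - v' j| :=
    calc |u i * v j - u' i * v' j| = |(u i - u' i) * v j + u' i * (v j - v' j)| := by ring_nf
      _ ≤ |u i - u' i| * |v j| + |u' i| * |v j - v' j| := by
        rw [← abs_mul, ← abs_mul]; exact abs_add_le _ _
      _ ≤ |u i - u' i| + |v j - v' j| := add_le_add
        (mul_le_of_le_one_right (abs_nonneg _) (hv j))
        (mul_le_of_le_one_left (abs_nonneg _) (hu' i))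
  calc |J i j * u i * v j - J i j * u' i * v' j| = |J i j| * |u i * v j - u' i * v' j| := by
        rw [← abs_mul]; ring_nf
    _ ≤ |J i j| * (∑ i, |u i - u' i| + ∑ j, |v j - v' j|) :=
        mul_le_mul_of_nonneg_left (hterm.trans (add_le_add
          (single_le_sum (fun k _ => abs_nonneg (u k - u' k)) (mem_univ i))
          (single_le_sum (fun k _ => abs_nonneg (v k - v' k)) (mem_univ j)))) (abs_nonneg _)

end BilinearBounds

section Energy

local notation "μ²" => Measure.prod (volume.restrict I01) (volume.restrict I01)

variable {q : ℕ} {W : ℝ → ℝ → ℝ} {M : ℝ}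

lemma ae_mem_I01_prod : ∀ᵐ p ∂μ², p.1 ∈ I01 ∧ p.2 ∈ I01 := by
  rw [Measure.prod_restrict]
  exact (ae_restrict_iff' (measurableSet_Icc.prod measurableSet_Icc)).2
    (Eventually.of_forall fun _ hp => hp)

lemma integrable_prod_I01_of_bound {F : ℝ × ℝ → ℝ} (hF : Measurable F) (C : ℝ)
    (hC : ∀ p : ℝ × ℝ, p.1 ∈ I01 → p.2 ∈ I01 → |F p| ≤ C) : Integrable F μ² :=
  Integrable.of_bound hF.aestronglyMeasurable C (ae_mem_I01_prod.mono fun p hp => hC p hp.1 hp.2)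

def l1Dist (ρ σ : FracPartition q) : ℝ := ∫ x in I01, ∑ i, |ρ.toFun i x - σ.toFun i x|

lemma integrableOn_sum_abs_sub (ρ σ : FracPartition q) :
    IntegrableOn (fun x => ∑ i, |ρ.toFun i x - σ.toFun i x|) I01 :=
  integrableOn_I01_of_bound (Finset.measurable_sum _ fun i _ =>
    ((ρ.measurable i).sub (σ.measurable i)).abs) (∑ _i : Fin q, (1 + 1 : ℝ)) fun x hx => by
      rw [abs_of_nonneg (sum_nonneg fun i _ => abs_nonneg _)]
      exact sum_le_sum fun i _ => (abs_sub _ _).trans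
        (add_le_add (ρ.abs_le_one i hx) (σ.abs_le_one i hx))

def energyDensity (W : ℝ → ℝ → ℝ) (J : Matrix (Fin q) (Fin q) ℝ) (ρ : FracPartition q)
    (p : ℝ × ℝ) : ℝ :=
  (∑ i, ∑ j, J i j * ρ.toFun i p.1 * ρ.toFun j p.2) * W p.1 p.2

lemma measurable_energyDensity (hWm : Measurable (uncurry W)) (J : Matrix (Fin q) (Fin q) ℝ)
    (ρ : FracPartition q) : Measurable (energyDensity W J ρ) :=
  (Finset.measurable_sum _ fun i _ => Finset.measurable_sum _ fun j _ =>
    (((ρ.measurable i).comp measurable_fst).const_mul _).mul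
      ((ρ.measurable j).comp measurable_snd)).mul hWm

lemma abs_energyDensity_le (hM : ∀ x y, |W x y| ≤ M) (J : Matrix (Fin q) (Fin q) ℝ)
    (ρ : FracPartition q) {p : ℝ × ℝ} (h₁ : p.1 ∈ I01) (h₂ : p.2 ∈ I01) :
    |energyDensity W J ρ p| ≤ (∑ i, ∑ j, |J i j|) * M := by
  rw [energyDensity, abs_mul]
  exact mul_le_mul (abs_sum_mul_mul_le J (fun i => ρ.abs_le_one i h₁)
    fun j => ρ.abs_le_one j h₂) (hM _ _) (abs_nonneg _)
    (sum_nonneg fun i _ => sum_nonneg fun j _ => abs_nonneg _)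

lemma energy_eq_neg_integral (hWm : Measurable (uncurry W)) (hM : ∀ x y, |W x y| ≤ M)
    (J : Matrix (Fin q) (Fin q) ℝ) (ρ : FracPartition q) :
    energy W J ρ = -∫ p, energyDensity W J ρ p ∂μ² := by
  have hmeas : ∀ i j, Measurable fun p : ℝ × ℝ => ρ.toFun i p.1 * ρ.toFun j p.2 * W p.1 p.2 :=
    fun i j => (((ρ.measurable i).comp measurable_fst).mul
      ((ρ.measurable j).comp measurable_snd)).mul hWm
  have hint : ∀ i j, Integrable (fun p : ℝ × ℝ => ρ.toFun i p.1 * ρ.toFun j p.2 * W p.1 p.2) μ² :=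
    fun i j => integrable_prod_I01_of_bound (hmeas i j) M fun p h₁ h₂ => by
      rw [abs_mul, abs_mul]
      exact mul_le_of_le_one_left (abs_nonneg _)
        (mul_le_one₀ (ρ.abs_le_one i h₁) (abs_nonneg _) (ρ.abs_le_one j h₂)) |>.trans (hM _ _)
  rw [energy, neg_inj]
  calc ∑ i, ∑ j, J i j * ∫ x in I01, ∫ y in I01, ρ.toFun i x * ρ.toFun j y * W x y
      = ∑ i, ∑ j, ∫ p, J i j * (ρ.toFun i p.1 * ρ.toFun j p.2 * W p.1 p.2) ∂μ² :=
        sum_congr rfl fun i _ => sum_congr rfl fun j _ => by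
          rw [integral_const_mul (J i j), integral_prod _ (hint i j)]
    _ = ∫ p, ∑ i, ∑ j, J i j * (ρ.toFun i p.1 * ρ.toFun j p.2 * W p.1 p.2) ∂μ² := by
        rw [integral_finsetSum _ fun i _ =>
          integrable_finsetSum _ fun j _ => (hint i j).const_mul (J i j)]
        exact sum_congr rfl fun i _ =>
          (integral_finsetSum _ fun j _ => (hint i j).const_mul (J i j)).symm
    _ = ∫ p, energyDensity W J ρ p ∂μ² := by
        simp only [energyDensity, sum_mul, mul_assoc]

lemma abs_energy_le (hWm : Measurable (uncurry W)) (hM : ∀ x y, |W x y| ≤ M)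
    (J : Matrix (Fin q) (Fin q) ℝ) (ρ : FracPartition q) :
    |energy W J ρ| ≤ (∑ i, ∑ j, |J i j|) * M := by
  rw [energy_eq_neg_integral hWm hM, abs_neg]
  simpa using norm_integral_le_of_norm_le_const
    (ae_mem_I01_prod.mono fun _ hp => (Real.norm_eq_abs _).trans_le
      (abs_energyDensity_le hM J ρ hp.1 hp.2))

lemma abs_energy_sub_le (hWm : Measurable (uncurry W)) (hM : ∀ x y, |W x y| ≤ M)
    (J : Matrix (Fin q) (Fin q) ℝ) (ρ σ : FracPartition q) :
    |energy W J ρ - energy W J σ| ≤ 2 * M * (∑ i, ∑ j, |J i j|) * l1Dist ρ σ := by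
  set D : ℝ → ℝ := fun x => ∑ i, |ρ.toFun i x - σ.toFun i x|
  have hDint : Integrable D (volume.restrict I01) := integrableOn_sum_abs_sub ρ σ
  have hbound : ∀ᵐ p ∂μ², ‖energyDensity W J ρ p - energyDensity W J σ p‖ ≤
      (∑ i, ∑ j, |J i j|) * M * (D p.1 + D p.2) := ae_mem_I01_prod.mono fun p hp => by
    rw [Real.norm_eq_abs, energyDensity, energyDensity, ← sub_mul, abs_mul, mul_right_comm]
    exact mul_le_mul (abs_sum_mul_mul_sub_le J (fun i => σ.abs_le_one i hp.1)
      fun j => ρ.abs_le_one j hp.2) (hM _ _) (abs_nonneg _)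
      (mul_nonneg (sum_nonneg fun i _ => sum_nonneg fun j _ => abs_nonneg _)
        (add_nonneg (sum_nonneg fun i _ => abs_nonneg _) (sum_nonneg fun i _ => abs_nonneg _)))
  have hint : ∀ τ : FracPartition q, Integrable (energyDensity W J τ) μ² := fun τ =>
    integrable_prod_I01_of_bound (measurable_energyDensity hWm J τ) _
      fun _ h₁ h₂ => abs_energyDensity_le hM J τ h₁ h₂
  rw [energy_eq_neg_integral hWm hM, energy_eq_neg_integral hWm hM, neg_sub_neg,
    abs_sub_comm, ← integral_sub (hint ρ) (hint σ)]
  have hD₁ : Integrable (fun p : ℝ × ℝ => D p.1) μ² := hDint.comp_fst _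
  have hD₂ : Integrable (fun p : ℝ × ℝ => D p.2) μ² := hDint.comp_snd _
  have hD₁₂ : Integrable (fun p : ℝ × ℝ => D p.1 + D p.2) μ² := hD₁.add hD₂
  refine (norm_integral_le_of_norm_le (hD₁₂.const_mul _) hbound).trans_eq ?_
  rw [integral_const_mul, integral_add hD₁ hD₂, integral_fun_fst D, integral_fun_snd D]
  simp only [probReal_univ, one_smul, l1Dist, D]
  ring

end Energy

lemma sum_abs_redistribute_sub_le {q : ℕ} {s w u : Fin q → ℝ} (hs : ∀ i, s i ≤ 1)
    (hw : IsDist w) (hu : ∀ i, 0 ≤ u i) :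
    ∑ i, |s i * u i + w i * ∑ j, (1 - s j) * u j - u i| ≤ 2 * ∑ j, (1 - s j) * u j := by
  have hF : 0 ≤ ∑ j, (1 - s j) * u j :=
    sum_nonneg fun j _ => mul_nonneg (by linarith [hs j]) (hu j)
  calc ∑ i, |s i * u i + w i * ∑ j, (1 - s j) * u j - u i|
      ≤ ∑ i, (w i * ∑ j, (1 - s j) * u j + (1 - s i) * u i) := sum_le_sum fun i _ => by
        rw [show s i * u i + w i * ∑ j, (1 - s j) * u j - u i =
          w i * ∑ j, (1 - s j) * u j - (1 - s i) * u i by ring]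
        refine (abs_sub _ _).trans (le_of_eq ?_)
        rw [abs_of_nonneg (mul_nonneg (hw.1 i) hF),
          abs_of_nonneg (mul_nonneg (by linarith [hs i]) (hu i))]
    _ = 2 * ∑ j, (1 - s j) * u j := by rw [sum_add_distrib, ← sum_mul, hw.2]; ring

namespace FracPartition

variable {q : ℕ}

def redistribute (ρ : FracPartition q) {s w : Fin q → ℝ} (hs : ∀ i, s i ≤ 1)
    (hs₀ : ∀ i, 0 ≤ s i) (hw : IsDist w) : FracPartition q :=
  ofIsDist (fun i x => s i * ρ.toFun i x + w i * ∑ j, (1 - s j) * ρ.toFun j x)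
    (fun i => ((ρ.measurable i).const_mul _).add ((Finset.measurable_sum _ fun j _ =>
      (ρ.measurable j).const_mul _).const_mul _))
    fun _ hx => (ρ.isDist hx).redistribute hs hs₀ hw

lemma integral_redistribute (ρ : FracPartition q) {s w : Fin q → ℝ} (hs : ∀ i, s i ≤ 1)
    (hs₀ : ∀ i, 0 ≤ s i) (hw : IsDist w) (i : Fin q) :
    ∫ x in I01, (ρ.redistribute hs hs₀ hw).toFun i x =
      s i * (∫ x in I01, ρ.toFun i x) + w i * ∑ j, (1 - s j) * ∫ x in I01, ρ.toFun j x := by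
  have hint : ∀ j, IntegrableOn (fun x => (1 - s j) * ρ.toFun j x) I01 :=
    fun j => (ρ.integrableOn j).const_mul _
  simp only [redistribute, ofIsDist]
  rw [integral_add ((ρ.integrableOn i).const_mul _)
      ((integrable_finsetSum _ fun j _ => hint j).const_mul _),
    integral_const_mul, integral_const_mul, integral_finsetSum _ fun j _ => hint j]
  simp only [integral_const_mul]

lemma l1Dist_redistribute_le (ρ : FracPartition q) {s w : Fin q → ℝ} (hs : ∀ i, s i ≤ 1)
    (hs₀ : ∀ i, 0 ≤ s i) (hw : IsDist w) :
    l1Dist (ρ.redistribute hs hs₀ hw) ρ ≤ 2 * ∑ j, (1 - s j) * ∫ x in I01, ρ.toFun j x := by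
  have hint : ∀ j, IntegrableOn (fun x => (1 - s j) * ρ.toFun j x) I01 :=
    fun j => (ρ.integrableOn j).const_mul _
  calc l1Dist (ρ.redistribute hs hs₀ hw) ρ
      ≤ ∫ x in I01, 2 * ∑ j, (1 - s j) * ρ.toFun j x := by
        refine setIntegral_mono_on (integrableOn_sum_abs_sub _ ρ)
          ((integrable_finsetSum _ fun j _ => hint j).const_mul _) measurableSet_Icc
          fun x hx => sum_abs_redistribute_sub_le hs hw (ρ.isDist hx).1
    _ = 2 * ∑ j, (1 - s j) * ∫ x in I01, ρ.toFun j x := by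
        rw [integral_const_mul, integral_finsetSum _ fun j _ => hint j]
        simp only [integral_const_mul]

lemma exists_l1Dist_le_of_marginals {a b : Fin q → ℝ} (ha : IsDist a) (hb : IsDist b)
    (ρ : FracPartition q) (hρ : ∀ i, ∫ x in I01, ρ.toFun i x = a i) :
    ∃ σ : FracPartition q, (∀ i, ∫ x in I01, σ.toFun i x = b i) ∧
      l1Dist σ ρ ≤ ∑ i, |a i - b i| := by
  set m : Fin q → ℝ := fun i => min (a i) (b i)
  set r := ∑ i, (a i - m i)
  have hbr : ∑ i, (b i - m i) = r := by simp only [r, sum_sub_distrib, ha.2, hb.2]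
  have habs : ∑ i, |a i - b i| = 2 * r :=
    calc ∑ i, |a i - b i| = ∑ i, ((a i - m i) + (b i - m i)) := sum_congr rfl fun i _ => by
          linarith [max_sub_min_eq_abs' (a i) (b i), min_add_max (a i) (b i)]
      _ = 2 * r := by rw [sum_add_distrib, hbr]; ring
  by_cases hr : r = 0
  · have hab : ∀ i, a i = b i := fun i => sub_eq_zero.1 <| abs_eq_zero.1 <|
      (sum_eq_zero_iff_of_nonneg fun j _ => abs_nonneg (a j - b j)).1
        (by rw [habs, hr, mul_zero]) i (mem_univ i)
    refine ⟨ρ, fun i => (hρ i).trans (hab i), ?_⟩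
    simpa [l1Dist] using sum_nonneg fun i _ => abs_nonneg (a i - b i)
  -- keep the fraction `s i = m i / a i` of each class and spread the freed mass `r` along `w`;
  -- where `a i = 0`, Lean's `m i / 0 = 0` is harmless because then `m i = 0`
  have hr₀ : 0 < r :=
    lt_of_le_of_ne (sum_nonneg fun i _ => sub_nonneg.2 (min_le_left _ _)) (Ne.symm hr)
  set s : Fin q → ℝ := fun i => m i / a i
  have hs : ∀ i, s i ≤ 1 := fun i => div_le_one_of_le₀ (min_le_left _ _) (ha.1 i)
  have hs₀ : ∀ i, 0 ≤ s i := fun i => div_nonneg (le_min (ha.1 i) (hb.1 i)) (ha.1 i)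
  have hsa : ∀ i, s i * a i = m i := fun i => by
    rcases (ha.1 i).eq_or_lt with h | h
    · simp [s, m, ← h, min_eq_left (hb.1 i)]
    · exact div_mul_cancel₀ _ h.ne'
  set w : Fin q → ℝ := fun i => (b i - m i) / r
  have hw : IsDist w := ⟨fun i => div_nonneg (sub_nonneg.2 (min_le_right _ _)) hr₀.le, by
    simp only [w, ← sum_div, hbr, div_self hr]⟩
  have hfree : ∑ j, (1 - s j) * a j = r := sum_congr rfl fun j _ => by rw [sub_mul, one_mul, hsa]
  refine ⟨ρ.redistribute hs hs₀ hw, fun i => ?_, ?_⟩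
  · simp only [ρ.integral_redistribute, hρ, hfree, hsa, w]
    field_simp
    ring
  · calc l1Dist (ρ.redistribute hs hs₀ hw) ρ
        ≤ 2 * ∑ j, (1 - s j) * ∫ x in I01, ρ.toFun j x := ρ.l1Dist_redistribute_le hs hs₀ hw
      _ = ∑ i, |a i - b i| := by simp only [hρ, hfree, habs]

end FracPartition

section GroundStates

variable {q : ℕ} {W : ℝ → ℝ → ℝ} {M : ℝ} {J : Matrix (Fin q) (Fin q) ℝ}

lemma bddBelow_energy (hWm : Measurable (uncurry W)) (hM : ∀ x y, |W x y| ≤ M)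
    (P : FracPartition q → Prop) :
    BddBelow {e | ∃ ρ, P ρ ∧ e = energy W J ρ} :=
  ⟨-((∑ i, ∑ j, |J i j|) * M), by
    rintro _ ⟨ρ, _, rfl⟩
    exact neg_le_of_abs_le (abs_energy_le hWm hM J ρ)⟩

lemma mgse_set_nonempty {a : Fin q → ℝ} (ha : IsDist a) :
    {e | ∃ ρ : FracPartition q, (∀ i, ∫ x in I01, ρ.toFun i x = a i) ∧
      e = energy W J ρ}.Nonempty :=
  ⟨_, FracPartition.const a ha, FracPartition.integral_const a ha, rfl⟩

lemma neg_le_mgse (hWm : Measurable (uncurry W)) (hM : ∀ x y, |W x y| ≤ M)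
    {a : Fin q → ℝ} (ha : IsDist a) : -((∑ i, ∑ j, |J i j|) * M) ≤ mgse W J a :=
  le_csInf (mgse_set_nonempty ha) fun _ ⟨ρ, _, he⟩ =>
    he ▸ neg_le_of_abs_le (abs_energy_le hWm hM J ρ)

lemma mgse_le_mgse_add (hWm : Measurable (uncurry W)) (hM : ∀ x y, |W x y| ≤ M)
    {a b : Fin q → ℝ} (ha : IsDist a) (hb : IsDist b) :
    mgse W J b ≤ mgse W J a + 2 * M * (∑ i, ∑ j, |J i j|) * ∑ i, |a i - b i| := by
  have hC : 0 ≤ 2 * M * (∑ i, ∑ j, |J i j|) := mul_nonneg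
    (mul_nonneg zero_le_two ((abs_nonneg _).trans (hM 0 0)))
    (sum_nonneg fun i _ => sum_nonneg fun j _ => abs_nonneg _)
  refine csInf_le_csInf_add (mgse_set_nonempty ha) (bddBelow_energy hWm hM _) ?_
  rintro _ ⟨ρ, hρ, rfl⟩
  obtain ⟨σ, hσ, hσρ⟩ := FracPartition.exists_l1Dist_le_of_marginals ha hb ρ hρ
  refine ⟨_, ⟨σ, hσ, rfl⟩, ?_⟩
  linarith [le_of_abs_le (abs_energy_sub_le hWm hM J σ ρ), mul_le_mul_of_nonneg_left hσρ hC]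

lemma bddBelow_ltgseV_set (hWm : Measurable (uncurry W)) (hM : ∀ x y, |W x y| ≤ M)
    (x : Fin q → ℝ) :
    BddBelow {e | ∃ a : Fin q → ℝ, IsDist a ∧ (∀ i, x i ≤ a i) ∧ e = mgse W J a} :=
  ⟨-((∑ i, ∑ j, |J i j|) * M), by
    rintro _ ⟨a, ha, _, rfl⟩
    exact neg_le_mgse hWm hM ha⟩

lemma ltgseV_set_nonempty [NeZero q] {x : Fin q → ℝ}
    (hx : ∀ i, 0 ≤ x i) (hs : ∑ i, x i ≤ 1) :
    {e | ∃ a : Fin q → ℝ, IsDist a ∧ (∀ i, x i ≤ a i) ∧ e = mgse W J a}.Nonempty :=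
  let ⟨a, ha, hxa⟩ := exists_isDist_ge hx hs
  ⟨_, a, ha, hxa, rfl⟩

lemma ltgseV_le_ltgseV_add [NeZero q] (hWm : Measurable (uncurry W)) (hM : ∀ x y, |W x y| ≤ M)
    {x x' : Fin q → ℝ} (hx : ∀ i, 0 ≤ x i) (hx' : ∀ i, 0 ≤ x' i)
    (hsum : ∑ i, x i = ∑ i, x' i) (hs : ∑ i, x i ≤ 1) :
    ltgseV W J x' ≤ ltgseV W J x + 2 * M * (∑ i, ∑ j, |J i j|) * ∑ i, |x i - x' i| := by
  refine csInf_le_csInf_add (ltgseV_set_nonempty hx hs) (bddBelow_ltgseV_set hWm hM x') ?_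
  rintro _ ⟨a, ha, hxa, rfl⟩
  have ha' : IsDist fun i => a i - x i + x' i :=
    ⟨fun i => by linarith [hxa i, hx' i], by
      rw [sum_add_distrib, sum_sub_distrib, ha.2, hsum]; ring⟩
  refine ⟨_, ⟨_, ha', fun i => by linarith [hxa i], rfl⟩, ?_⟩
  convert mgse_le_mgse_add hWm hM ha ha' using 4
  ring_nf

lemma abs_ltgseV_sub_le [NeZero q] (hWm : Measurable (uncurry W)) (hM : ∀ x y, |W x y| ≤ M)
    {x x' : Fin q → ℝ} (hx : ∀ i, 0 ≤ x i) (hx' : ∀ i, 0 ≤ x' i)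
    (hsum : ∑ i, x i = ∑ i, x' i) (hs : ∑ i, x i ≤ 1) :
    |ltgseV W J x - ltgseV W J x'| ≤ 2 * M * (∑ i, ∑ j, |J i j|) * ∑ i, |x i - x' i| := by
  have h₁ := ltgseV_le_ltgseV_add (J := J) hWm hM hx hx' hsum hs
  have h₂ := ltgseV_le_ltgseV_add (J := J) hWm hM hx' hx hsum.symm (hsum ▸ hs)
  simp only [abs_sub_comm (x' _)] at h₂
  exact abs_sub_le_iff.2 ⟨by linarith, by linarith⟩

end GroundStates

section BlowUp

variable {q n : ℕ} {W : ℝ → ℝ → ℝ} {M : ℝ} {J : Matrix (Fin q) (Fin q) ℝ}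

lemma energy_submatrix (hWm : Measurable (uncurry W)) (hM : ∀ x y, |W x y| ≤ M)
    (g : Fin n → Fin q) (ρ : FracPartition n) :
    energy W (J.submatrix g g) ρ = energy W J (ρ.group g) := by
  rw [energy_eq_neg_integral hWm hM, energy_eq_neg_integral hWm hM]
  simp only [energyDensity, sum_mul_submatrix_eq]
  rfl

lemma mgse_submatrix_fiberSplit_le (hWm : Measurable (uncurry W)) (hM : ∀ x y, |W x y| ≤ M)
    {g : Fin n → Fin q} (hg : Surjective g) {a : Fin q → ℝ} (ha : IsDist a) :
    mgse W (J.submatrix g g) (fiberSplit g a) ≤ mgse W J a := by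
  refine csInf_le_csInf (bddBelow_energy hWm hM _) (mgse_set_nonempty ha) ?_
  rintro _ ⟨ρ, hρ, rfl⟩
  refine ⟨ρ.split g hg, fun α => ?_, ?_⟩
  · rw [FracPartition.integral_split, funext hρ]
  · rw [energy_submatrix hWm hM, FracPartition.group_split]

lemma mgse_fiberSum_le (hWm : Measurable (uncurry W)) (hM : ∀ x y, |W x y| ≤ M)
    (g : Fin n → Fin q) {b : Fin n → ℝ} (hb : IsDist b) :
    mgse W J (fiberSum g b) ≤ mgse W (J.submatrix g g) b := by
  refine csInf_le_csInf (bddBelow_energy hWm hM _) (mgse_set_nonempty hb) ?_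
  rintro _ ⟨ρ, hρ, rfl⟩
  refine ⟨ρ.group g, fun i => ?_, energy_submatrix hWm hM g ρ⟩
  rw [FracPartition.integral_group, funext hρ]

lemma ltgse_submatrix_eq [NeZero q] (hWm : Measurable (uncurry W)) (hM : ∀ x y, |W x y| ≤ M)
    {g : Fin n → Fin q} (hg : Surjective g) {c : ℝ} (hc : 0 ≤ c) (hnc : n * c ≤ 1) :
    ltgse W (J.submatrix g g) c = ltgseV W J (fun i => fiberCard g i * c) := by
  have : NeZero n := ⟨(hg 0).choose.pos.ne'⟩
  have hsum : ∑ i, (fiberCard g i : ℝ) * c = n * c := by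
    simp only [← fiberSum_const, sum_fiberSum, sum_const, card_univ, Fintype.card_fin,
      nsmul_eq_mul]
  have hn : ∑ _α : Fin n, c = n * c := by simp
  refine le_antisymm ?_ ?_
  · refine (csInf_le_csInf_add (ltgseV_set_nonempty
      (fun i => mul_nonneg (Nat.cast_nonneg _) hc) (hsum ▸ hnc))
      (bddBelow_ltgseV_set hWm hM _) ?_).trans_eq (add_zero _)
    rintro _ ⟨a, ha, hca, rfl⟩
    refine ⟨_, ⟨_, ha.fiberSplit hg, fun α => ?_, rfl⟩,
      (mgse_submatrix_fiberSplit_le hWm hM hg ha).trans_eq (add_zero _).symm⟩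
    rw [fiberSplit, le_div_iff₀ (Nat.cast_pos.2 (fiberCard_pos hg _)), mul_comm]
    exact hca _
  · refine (csInf_le_csInf_add (ltgseV_set_nonempty (fun _ => hc) (hn ▸ hnc))
      (bddBelow_ltgseV_set hWm hM _) ?_).trans_eq (add_zero _)
    rintro _ ⟨b, hb, hcb, rfl⟩
    refine ⟨_, ⟨_, hb.fiberSum, fun i => ?_, rfl⟩,
      (mgse_fiberSum_le hWm hM g hb).trans_eq (add_zero _).symm⟩
    rw [← fiberSum_const]
    exact sum_le_sum fun α _ => hcb α

end BlowUp

lemma exists_surjective_fiberCard_eq {q : ℕ} {k : Fin q → ℕ} (hk : ∀ i, 0 < k i) :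
    ∃ g : Fin (∑ i, k i) → Fin q, Surjective g ∧ ∀ i, fiberCard g i = k i := by
  set g : Fin (∑ i, k i) → Fin q := fun α => (finSigmaFinEquiv.symm α).1
  have hg : ∀ i, fiberCard g i = k i := fun i => by
    rw [fiberCard, card_filter, ← finSigmaFinEquiv.sum_comp]
    simp only [g, Equiv.symm_apply_apply]
    rw [Fintype.sum_sigma]
    simp [apply_ite Finset.card]
  refine ⟨g, fun i => ?_, hg⟩
  obtain ⟨α, hα⟩ := card_pos.1 ((hg i).symm ▸ hk i : 0 < fiberCard g i)
  exact ⟨α, (mem_filter.1 hα).2⟩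

lemma exists_nat_approx {q : ℕ} [NeZero q] {x : Fin q → ℝ} (hx : ∀ i, 0 ≤ x i) {ε : ℝ}
    (hε : 0 < ε) : ∃ k : Fin q → ℕ, (∀ i, 0 < k i) ∧
      ∑ i, |k i * ((∑ j, x j) / ∑ j, (k j : ℝ)) - x i| ≤ ε := by
  set h := ∑ j, x j
  have hh : 0 ≤ h := sum_nonneg fun j _ => hx j
  obtain ⟨N, hN⟩ := exists_nat_gt (2 * q / ε)
  set k : Fin q → ℕ := fun i => ⌊x i * N⌋₊ + 1
  set e : Fin q → ℝ := fun i => k i - x i * N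
  have he : ∀ i, 0 < e i ∧ e i ≤ 1 := fun i => by
    have h₁ := Nat.floor_le (mul_nonneg (hx i) N.cast_nonneg)
    have h₂ := Nat.lt_floor_add_one (x i * N)
    simp only [e, k]
    push_cast
    constructor <;> linarith
  set S := ∑ j, (k j : ℝ)
  have hS : S = h * N + ∑ j, e j := by simp only [S, e, h, sum_sub_distrib, ← sum_mul]; ring
  have he₀ : 0 < ∑ j, e j := sum_pos (fun j _ => (he j).1) univ_nonempty
  have heq : ∑ j, e j ≤ q := (sum_le_sum fun j _ => (he j).2).trans (by simp)
  have hS₀ : 0 < S := by rw [hS]; positivity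
  refine ⟨k, fun i => Nat.succ_pos _, ?_⟩
  have hterm : ∀ i, |k i * (h / S) - x i| ≤ (e i * h + x i * ∑ j, e j) / S := fun i => by
    rw [show k i * (h / S) - x i = (e i * h - x i * ∑ j, e j) / S by
      field_simp; rw [hS]; simp only [e]; ring, abs_div, abs_of_pos hS₀]
    gcongr
    refine (abs_sub _ _).trans_eq ?_
    rw [abs_of_nonneg (mul_nonneg (he i).1.le hh), abs_of_nonneg (mul_nonneg (hx i) he₀.le)]
  calc ∑ i, |k i * (h / S) - x i| ≤ ∑ i, (e i * h + x i * ∑ j, e j) / S :=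
        sum_le_sum fun i _ => hterm i
    _ = 2 * h * (∑ j, e j) / S := by
        rw [← sum_div, sum_add_distrib, ← sum_mul, ← sum_mul]
        ring
    _ ≤ ε := by
        rw [div_le_iff₀ hS₀, hS]
        have hqN : 2 * q < ε * N := by rwa [div_lt_iff₀' hε] at hN
        nlinarith [mul_le_mul_of_nonneg_left heq hh, mul_le_mul_of_nonneg_left hqN.le hh]

lemma exists_surjective_approx {q : ℕ} [NeZero q] {x : Fin q → ℝ} (hx : ∀ i, 0 ≤ x i) {ε : ℝ}
    (hε : 0 < ε) : ∃ (n : ℕ) (g : Fin n → Fin q), Surjective g ∧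
      ∑ i, |fiberCard g i * ((∑ j, x j) / n) - x i| ≤ ε := by
  obtain ⟨k, hk, hkx⟩ := exists_nat_approx hx hε
  obtain ⟨g, hg, hgk⟩ := exists_surjective_fiberCard_eq hk
  refine ⟨_, g, hg, ?_⟩
  simpa [hgk] using hkx

theorem stmt12 (lo hi : ℝ) (W : ℕ → ℝ → ℝ → ℝ)
    (hW : ∀ n, IsGraphon (W n)) (hWI : ∀ n x y, W n x y ∈ Set.Icc lo hi)
    (h : ℝ) (hh0 : 0 ≤ h) (hh1 : h ≤ 1)
    (hconv : ∀ q' : ℕ, 1 ≤ q' → ∀ J' : Matrix (Fin q') (Fin q') ℝ, J'.IsSymm →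
      ∃ L : ℝ, Tendsto (fun n => ltgse (W n) J' (h / q')) atTop (nhds L)) :
    ∀ q : ℕ, 1 ≤ q → ∀ x : Fin q → ℝ, (∀ i, 0 ≤ x i) → ∑ i, x i = h →
      ∀ J : Matrix (Fin q) (Fin q) ℝ, J.IsSymm →
        ∃ L : ℝ, Tendsto (fun n => ltgseV (W n) J x) atTop (nhds L) := by
  intro q hq x hx hxs J hJ
  have : NeZero q := ⟨by omega⟩
  have hM : ∀ n a b, |W n a b| ≤ max |lo| |hi| := fun n a b =>
    abs_le_max_abs_abs (hWI n a b).1 (hWI n a b).2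
  set C := 2 * max |lo| |hi| * ∑ i, ∑ j, |J i j|
  refine cauchySeq_tendsto_of_complete
    (cauchySeq_of_forall_exists_cauchySeq_dist_le fun ε hε => ?_)
  obtain ⟨n, g, hg, hgx⟩ := exists_surjective_approx hx (div_pos hε (by positivity : 0 < C + 1))
  rw [hxs] at hgx
  have hn : 1 ≤ n := (hg 0).choose.pos
  have hnh : n * (h / n) ≤ 1 := by rw [mul_div_cancel₀ _ (by positivity)]; exact hh1
  obtain ⟨L, hL⟩ := hconv n hn _ (hJ.submatrix g)
  refine ⟨_, hL.cauchySeq, fun m => ?_⟩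
  rw [ltgse_submatrix_eq (hW m).1 (hM m) hg (by positivity) hnh, Real.dist_eq]
  have hsum : ∑ i, x i = ∑ i, fiberCard g i * (h / n) := by
    rw [← sum_mul, ← Nat.cast_sum, sum_fiberCard, Fintype.card_fin,
      mul_div_cancel₀ _ (by positivity), hxs]
  calc _ ≤ C * ∑ i, |x i - fiberCard g i * (h / n)| :=
        abs_ltgseV_sub_le (hW m).1 (hM m) hx (fun i => by positivity) hsum (hxs ▸ hh1)
    _ ≤ C * (ε / (C + 1)) := by
        gcongr
        exact (sum_congr rfl fun i _ => abs_sub_comm _ _).trans_le hgx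
    _ ≤ ε := by
        rw [mul_div_assoc', div_le_iff₀ (by positivity)]
        nlinarith
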